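/- Let f be a submodular function on a finite ground set V and let A ⊆ V. Suppose there exist λ ∈ [0,1] and vectors x₁, x₂ ∈ ℝ^V with λ·x₁ + (1−λ)·x₂ = 0, where x₁ satisfies x₁(j) ≤ f(j | A \ {j}) for all j ∈ A and x₁(j) ≥ f(j | ∅) for all j ∉ A, and x₂ satisfies x₂(j) ≤ f(j | V \ {j}) for all j ∈ A and x₂(j) ≥ f(j | A) for all j ∉ A (i.e., the zero vector lies in the convex combination of the two inner-bound polyhedra of the superdifferential at A). Then A is a global maximizer of f: f(A) ≥ f(Y) for all Y ⊆ V. -/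
import Mathlib

section Aux

variable {V : Type*} [DecidableEq V]

/-- Marginal gains are antitone for submodular functions. -/
lemma marg_mono (f : Finset V → ℝ)
    (hf : ∀ S T : Finset V, f S + f T ≥ f (S ∪ T) + f (S ∩ T))
    {S T : Finset V} (hST : S ⊆ T) {j : V} (hj : j ∉ T) :
    f (insert j T) - f T ≤ f (insert j S) - f S := by
  have h := hf (insert j S) T
  have hu : insert j S ∪ T = insert j T := by
    ext x; simp only [Finset.mem_union, Finset.mem_insert]
    constructor
    · rintro (⟨rfl | hx⟩ | hx)
      · exact Or.inl rfl
      · exact Or.inr (hST ‹_›)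
      · exact Or.inr hx
    · rintro (rfl | hx)
      · exact Or.inl (Or.inl rfl)
      · exact Or.inr hx
  have hi : insert j S ∩ T = S := by
    ext x; simp only [Finset.mem_inter, Finset.mem_insert]
    constructor
    · rintro ⟨rfl | hx, hxT⟩
      · exact absurd hxT hj
      · exact hx
    · intro hx; exact ⟨Or.inr hx, hST hx⟩
  rw [hu, hi] at h
  linarith

lemma add_bound (f : Finset V → ℝ)
    (hf : ∀ S T : Finset V, f S + f T ≥ f (S ∪ T) + f (S ∩ T))
    (D B : Finset V) (hD : Disjoint D B) :
    f (B ∪ D) ≤ f B + ∑ j ∈ D, (f (insert j B) - f B) := by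
  induction D using Finset.induction_on with
  | empty => simp
  | @insert a D haD ih =>
    have hD' : Disjoint D B := (Finset.disjoint_insert_left.mp hD).2
    have haB : a ∉ B := (Finset.disjoint_insert_left.mp hD).1
    have h := hf (B ∪ D) (insert a B)
    have hu : (B ∪ D) ∪ insert a B = B ∪ insert a D := by
      ext x; simp only [Finset.mem_union, Finset.mem_insert]; tauto
    have hi : (B ∪ D) ∩ insert a B = B := by
      ext x; simp only [Finset.mem_inter, Finset.mem_union, Finset.mem_insert]
      constructor
      · rintro ⟨hx1 | hx1, rfl | hx2⟩
        · exact hx1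
        · exact hx2
        · exact absurd hx1 haD
        · exact hx2
      · intro hx; exact ⟨Or.inl hx, Or.inr hx⟩
    rw [hu, hi] at h
    rw [Finset.sum_insert haD]
    have := ih hD'
    linarith

lemma remove_bound (f : Finset V → ℝ)
    (hf : ∀ S T : Finset V, f S + f T ≥ f (S ∪ T) + f (S ∩ T))
    (D B : Finset V) (hD : D ⊆ B) :
    f (B \ D) ≤ f B - ∑ j ∈ D, (f B - f (B.erase j)) := by
  induction D using Finset.induction_on with
  | empty => simp
  | @insert a D haD ih =>
    have haB : a ∈ B := hD (Finset.mem_insert_self a D)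
    have hD' : D ⊆ B := fun x hx => hD (Finset.mem_insert_of_mem hx)
    have h := hf (B \ D) (B.erase a)
    have hu : (B \ D) ∪ B.erase a = B := by
      ext x
      simp only [Finset.mem_union, Finset.mem_sdiff, Finset.mem_erase]
      constructor
      · rintro (⟨hx, _⟩ | ⟨_, hx⟩) <;> exact ‹x ∈ B›
      · intro hx
        by_cases hxa : x = a
        · subst hxa; exact Or.inl ⟨hx, haD⟩
        · exact Or.inr ⟨hxa, hx⟩
    have hi : (B \ D) ∩ B.erase a = B \ insert a D := by
      ext x
      simp only [Finset.mem_inter, Finset.mem_sdiff, Finset.mem_erase, Finset.mem_insert]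
      tauto
    rw [hu, hi] at h
    rw [Finset.sum_insert haD]
    have := ih hD'
    linarith

end Aux

/-- If the zero vector lies in the convex combination
`conv(∂^f_{i,1}(A), ∂^f_{i,2}(A))` of the two inner-bound polyhedra of the
superdifferential at `A`, then `A` is a global maximizer of `f`. -/
theorem zero_in_convex_inner_bound_implies_global_max
    {V : Type*} [Fintype V] [DecidableEq V]
    (f : Finset V → ℝ)
    (hf : ∀ S T : Finset V, f S + f T ≥ f (S ∪ T) + f (S ∩ T))
    (A : Finset V) (lam : ℝ) (hlam0 : 0 ≤ lam) (hlam1 : lam ≤ 1)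
    (x₁ x₂ : V → ℝ)
    (hconv : ∀ j : V, lam * x₁ j + (1 - lam) * x₂ j = 0)
    (h₁A : ∀ j ∈ A, x₁ j ≤ f (insert j (A.erase j)) - f (A.erase j))
    (h₁nA : ∀ j ∉ A, x₁ j ≥ f (insert j ∅) - f ∅)
    (h₂A : ∀ j ∈ A, x₂ j ≤ f (insert j (Finset.univ.erase j)) - f (Finset.univ.erase j))
    (h₂nA : ∀ j ∉ A, x₂ j ≥ f (insert j A) - f A) :
    ∀ Y : Finset V, f A ≥ f Y := by
  intro Y
  -- x₁ is a supergradient at A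
  have key₁ : f Y - f A ≤ (∑ j ∈ Y \ A, x₁ j) - ∑ j ∈ A \ Y, x₁ j := by
    have hdisj : Disjoint (Y \ A) (A ∩ Y) := by
      simp [Finset.disjoint_left, Finset.mem_sdiff, Finset.mem_inter]
      tauto
    have h1 := add_bound f hf (Y \ A) (A ∩ Y) hdisj
    have hYeq : (A ∩ Y) ∪ (Y \ A) = Y := by
      ext x; simp only [Finset.mem_union, Finset.mem_inter, Finset.mem_sdiff]
      constructor
      · rintro (⟨_, hx⟩ | ⟨hx, _⟩) <;> exact hx
      · intro hx; by_cases hxA : x ∈ A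
        · exact Or.inl ⟨hxA, hx⟩
        · exact Or.inr ⟨hx, hxA⟩
    rw [hYeq] at h1
    have hs1 : ∑ j ∈ Y \ A, (f (insert j (A ∩ Y)) - f (A ∩ Y)) ≤ ∑ j ∈ Y \ A, x₁ j := by
      apply Finset.sum_le_sum
      intro j hj
      have hjA : j ∉ A := (Finset.mem_sdiff.mp hj).2
      have hjAY : j ∉ A ∩ Y := fun h => hjA (Finset.mem_inter.mp h).1
      have := marg_mono f hf (Finset.empty_subset (A ∩ Y)) hjAY
      have := h₁nA j hjA
      linarith
    have h2 := remove_bound f hf (A \ Y) A (Finset.sdiff_subset)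
    have hAeq : A \ (A \ Y) = A ∩ Y := by
      ext x; simp only [Finset.mem_sdiff, Finset.mem_inter]; tauto
    rw [hAeq] at h2
    have hs2 : ∑ j ∈ A \ Y, x₁ j ≤ ∑ j ∈ A \ Y, (f A - f (A.erase j)) := by
      apply Finset.sum_le_sum
      intro j hj
      have hjA : j ∈ A := (Finset.mem_sdiff.mp hj).1
      have := h₁A j hjA
      rw [Finset.insert_erase hjA] at this
      exact this
    linarith
  -- x₂ is a supergradient at A
  have key₂ : f Y - f A ≤ (∑ j ∈ Y \ A, x₂ j) - ∑ j ∈ A \ Y, x₂ j := by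
    have hdisj : Disjoint (Y \ A) A := by
      simp [Finset.disjoint_left, Finset.mem_sdiff]
    have h1 := add_bound f hf (Y \ A) A hdisj
    have hUeq : A ∪ (Y \ A) = A ∪ Y := by
      ext x; simp only [Finset.mem_union, Finset.mem_sdiff]; tauto
    rw [hUeq] at h1
    have hs1 : ∑ j ∈ Y \ A, (f (insert j A) - f A) ≤ ∑ j ∈ Y \ A, x₂ j := by
      apply Finset.sum_le_sum
      intro j hj
      exact h₂nA j (Finset.mem_sdiff.mp hj).2
    have h2 := remove_bound f hf (A \ Y) (A ∪ Y)
      (fun x hx => Finset.mem_union_left _ (Finset.mem_sdiff.mp hx).1)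
    have hYeq : (A ∪ Y) \ (A \ Y) = Y := by
      ext x; simp only [Finset.mem_sdiff, Finset.mem_union]; tauto
    rw [hYeq] at h2
    have hs2 : ∑ j ∈ A \ Y, x₂ j ≤ ∑ j ∈ A \ Y, (f (A ∪ Y) - f ((A ∪ Y).erase j)) := by
      apply Finset.sum_le_sum
      intro j hj
      have hjA : j ∈ A := (Finset.mem_sdiff.mp hj).1
      have hjAY : j ∈ A ∪ Y := Finset.mem_union_left _ hjA
      have hsub : (A ∪ Y).erase j ⊆ Finset.univ.erase j := by
        intro x hx
        rw [Finset.mem_erase] at hx ⊢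
        exact ⟨hx.1, Finset.mem_univ x⟩
      have hjnu : j ∉ Finset.univ.erase j := fun h => (Finset.mem_erase.mp h).1 rfl
      have hm := marg_mono f hf hsub hjnu
      rw [Finset.insert_erase hjAY] at hm
      have := h₂A j hjA
      linarith
    linarith
  -- combine
  have c1 : lam * (∑ j ∈ Y \ A, x₁ j) + (1 - lam) * (∑ j ∈ Y \ A, x₂ j) = 0 := by
    rw [Finset.mul_sum, Finset.mul_sum, ← Finset.sum_add_distrib]
    exact Finset.sum_eq_zero fun j _ => hconv j
  have c2 : lam * (∑ j ∈ A \ Y, x₁ j) + (1 - lam) * (∑ j ∈ A \ Y, x₂ j) = 0 := by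
    rw [Finset.mul_sum, Finset.mul_sum, ← Finset.sum_add_distrib]
    exact Finset.sum_eq_zero fun j _ => hconv j
  have hk1 := mul_le_mul_of_nonneg_left key₁ hlam0
  have hk2 := mul_le_mul_of_nonneg_left key₂ (by linarith : (0:ℝ) ≤ 1 - lam)
  nlinarith [hk1, hk2, c1, c2]
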